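/- arXiv:math/0204287 — 4 statements merged into one kernel-verified Lean document; each statement's English description precedes it below -/
import Mathlib

section
/- Let T be a bubble tree and let e = (v_i, v_j) be an edge of T, where v_j is a child of v_i. Let T' be the contraction of T at e: the tree obtained by deleting v_j, attaching all children of v_j as children of v_i, and replacing the weight w(v_i) by w(v_i) + w(v_j), all other weights unchanged. Then T' is again a bubble tree, with the same root and the same total charge as T. -/
inductive RTree : Type where
  | node : ℕ → List RTree → RTree

namespace RTree

/-- total charge: sum of all weights in the tree -/
def totalCharge : RTree → ℕ
  | .node w c => w + (c.attach.map fun t => totalCharge t.1).sum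
decreasing_by
  have := List.sizeOf_lt_of_mem t.2
  simp only [RTree.node.sizeOf_spec]
  omega

/-- number of vertices -/
def numVertices : RTree → ℕ
  | .node _ c => 1 + (c.attach.map fun t => numVertices t.1).sum
decreasing_by
  have := List.sizeOf_lt_of_mem t.2
  simp only [RTree.node.sizeOf_spec]
  omega

/-- bubble tree condition: every vertex has nonzero weight, or has at least two
children all of whose total charges are positive -/
inductive IsBubble : RTree → Prop where
  | node (w : ℕ) (c : List RTree)
      (hvert : w ≠ 0 ∨ (2 ≤ c.length ∧ ∀ t ∈ c, 0 < totalCharge t))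
      (hc : ∀ t ∈ c, IsBubble t) : IsBubble (.node w c)

end RTree

namespace RTree

/-- `Contracts T T'` means that `T'` is obtained from `T` by contracting a single
edge `e = (vᵢ, vⱼ)` (with `vⱼ` a child of `vᵢ`): the vertex `vⱼ` is deleted, all
children of `vⱼ` become children of `vᵢ`, and the weight of `vᵢ` is replaced by
`w(vᵢ) + w(vⱼ)`. -/
inductive Contracts : RTree → RTree → Prop where
  | root (w w' : ℕ) (l r c' : List RTree) :
      Contracts (.node w (l ++ .node w' c' :: r)) (.node (w + w') (l ++ c' ++ r))
  | child (w : ℕ) (l r : List RTree) {t t' : RTree} (h : Contracts t t') :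
      Contracts (.node w (l ++ t :: r)) (.node w (l ++ t' :: r))

end RTree


theorem RTree.totalCharge_node (w : ℕ) (c : List RTree) :
    RTree.totalCharge (.node w c) = w + (c.map RTree.totalCharge).sum := by
  rw [RTree.totalCharge]
  congr 1
  induction c with
  | nil => simp
  | cons a c ih => simp_all [List.attach_cons, List.map_map, Function.comp]


/-- Contracting an edge of a bubble tree yields again a bubble tree, with the same
total charge (and the same root). -/
theorem isBubble_of_contracts {T T' : RTree} (hT : RTree.IsBubble T)
    (h : RTree.Contracts T T') :
    RTree.IsBubble T' ∧ RTree.totalCharge T' = RTree.totalCharge T := by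
  induction h with
  | root w w' l r c' =>
    cases hT with
    | node _ _ hvert hc =>
      have hmem : RTree.node w' c' ∈ l ++ .node w' c' :: r := by simp
      have hinner := hc _ hmem
      cases hinner with
      | node _ _ hvert' hc' =>
        constructor
        · constructor
          · by_cases hw : w + w' = 0
            · right
              have hw0 : w = 0 := by omega
              have hw'0 : w' = 0 := by omega
              rcases hvert with h0 | ⟨hlen, hpos⟩
              · exact absurd hw0 h0
              rcases hvert' with h0 | ⟨hlen', hpos'⟩
              · exact absurd hw'0 h0
              refine ⟨by simp at hlen ⊢; omega, ?_⟩
              intro t ht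
              simp only [List.mem_append, List.mem_cons] at ht
              rcases ht with (ht | ht) | ht
              · exact hpos t (by simp [ht])
              · exact hpos' t ht
              · exact hpos t (by simp [ht])
            · exact Or.inl hw
          · intro t ht
            simp only [List.mem_append, List.mem_cons] at ht
            rcases ht with (ht | ht) | ht
            · exact hc t (by simp [ht])
            · exact hc' t ht
            · exact hc t (by simp [ht])
        · simp only [RTree.totalCharge_node, List.map_append, List.sum_append,
            List.map_cons, List.sum_cons]
          omega
  | child w l r h ih =>
    rename_i t t'
    cases hT with
    | node _ _ hvert hc =>
      have hbt : RTree.IsBubble t := hc t (by simp)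
      obtain ⟨hb', hch⟩ := ih hbt
      constructor
      · constructor
        · rcases hvert with h0 | ⟨hlen, hpos⟩
          · exact Or.inl h0
          · right
            refine ⟨by simpa using hlen, ?_⟩
            intro s hs
            simp only [List.mem_append, List.mem_cons] at hs
            rcases hs with hs | hs | hs
            · exact hpos s (by simp [hs])
            · subst hs; rw [hch]; exact hpos t (by simp)
            · exact hpos s (by simp [hs])
        · intro s hs
          simp only [List.mem_append, List.mem_cons] at hs
          rcases hs with hs | hs | hs
          · exact hc s (by simp [hs])
          · subst hs; exact hb'
          · exact hc s (by simp [hs])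
      · simp only [RTree.totalCharge_node, List.map_append, List.sum_append,
          List.map_cons, List.sum_cons]
        omega
end

section
/- Let β : ℝ → ℝ be a C^∞ function whose derivative β' has compact support, and fix T ∈ ℝ. For r > 0 define f_r on E ∖ {0}, where E = EuclideanSpace ℝ (Fin 4), by f_r(x) = β(log ‖x‖ − log r + T). Then: (i) for every x ≠ 0 and every r > 0, |∂f_r(x)/∂r| ≤ (sup_t |β'(t)|)/r; (ii) there is a constant C, depending only on β, such that for every r > 0 the spatial gradient of ∂f_r/∂r satisfies (∫_E ‖∇_x (∂f_r/∂r)(x)‖⁴ dx)^{1/4} ≤ C/r. -/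
/-!
Since `∂f_r/∂r (x) = -β'(log ‖x‖ - log r + T) / r`, bound (i) is immediate. Away from the origin
this function is `-r⁻¹ φ(λ x)` with `φ x = β'(log ‖x‖)` and `λ = e^T / r`. In dimension `4` the
`L⁴` norm of a gradient is invariant under dilations, so (ii) holds with `C` the `L⁴` norm of
`∇φ`, which is finite because `β''` has compact support.
-/

open MeasureTheory Module

section Scaling

variable {E F : Type*} [NormedAddCommGroup E] [NormedSpace ℝ E]
  [NormedAddCommGroup F] [NormedSpace ℝ F]

theorem fderiv_comp_const_smul (h : E → F) {a : ℝ} (ha : a ≠ 0) (y : E) :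
    fderiv ℝ (fun x => h (a • x)) y = a • fderiv ℝ h (a • y) := by
  have hcomp := (ContinuousLinearEquiv.smulLeft (R₁ := ℝ) (M₁ := E) (Units.mk0 a ha)).comp_right_fderiv
    (f := h) (x := y)
  ext v
  simpa [Function.comp_def] using congrArg (· v) hcomp

theorem norm_fderiv_const_smul_comp_const_smul (h : E → F) (c : ℝ) {a : ℝ} (ha : a ≠ 0) (y : E) :
    ‖fderiv ℝ (fun x => c • h (a • x)) y‖ = |c| * |a| * ‖fderiv ℝ h (a • y)‖ := by
  rw [show (fun x => c • h (a • x)) = c • fun x => h (a • x) from rfl, fderiv_const_smul_field,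
    Pi.smul_apply, fderiv_comp_const_smul h ha, norm_smul, norm_smul, Real.norm_eq_abs,
    Real.norm_eq_abs, mul_assoc]

theorem integral_norm_fderiv_pow_finrank_const_smul_comp_const_smul [MeasurableSpace E]
    [BorelSpace E] [FiniteDimensional ℝ E] (μ : Measure E) [μ.IsAddHaarMeasure] (h : E → F)
    (c : ℝ) {a : ℝ} (ha : a ≠ 0) :
    ∫ x, ‖fderiv ℝ (fun x => c • h (a • x)) x‖ ^ finrank ℝ E ∂μ
      = |c| ^ finrank ℝ E * ∫ x, ‖fderiv ℝ h x‖ ^ finrank ℝ E ∂μ := by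
  simp_rw [norm_fderiv_const_smul_comp_const_smul h c ha, mul_pow, mul_assoc]
  rw [integral_const_mul, integral_const_mul,
    Measure.integral_comp_smul μ (fun x => ‖fderiv ℝ h x‖ ^ finrank ℝ E), smul_eq_mul,
    ← mul_assoc (|a| ^ _), abs_inv, abs_pow, mul_inv_cancel₀ (by positivity), one_mul]

end Scaling

theorem hasDerivAt_comp_sub_log_add {β : ℝ → ℝ} {A T r : ℝ}
    (hβ : DifferentiableAt ℝ β (A - Real.log r + T)) (hr : r ≠ 0) :
    HasDerivAt (fun s => β (A - Real.log s + T)) (-deriv β (A - Real.log r + T) / r) r := by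
  have hu : HasDerivAt (fun s => A - Real.log s + T) (-r⁻¹) r := by
    simpa using ((Real.hasDerivAt_log hr).const_sub A).add_const T
  rw [neg_div, div_eq_mul_inv, ← mul_neg]
  exact hβ.hasDerivAt.comp r hu

theorem log_norm_sub_log_add_eq_log_norm_smul {E : Type*} [NormedAddCommGroup E]
    [NormedSpace ℝ E] {r : ℝ} (hr : 0 < r) (T : ℝ) {y : E} (hy : y ≠ 0) :
    Real.log ‖y‖ - Real.log r + T = Real.log ‖(Real.exp T / r) • y‖ := by
  rw [norm_smul, Real.norm_of_nonneg (by positivity), Real.log_mul (by positivity)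
    (norm_ne_zero_iff.2 hy), Real.log_div (Real.exp_ne_zero T) hr.ne', Real.log_exp]
  ring

/-- For a smooth cut-off function `β` with compactly supported derivative, the
radial cut-off functions `f_r(x) = β(log ‖x‖ - log r + T)` on `ℝ⁴ ∖ {0}` satisfy
`|∂f_r/∂r| ≤ (sup |β'|) / r`, and the `L⁴`-norm of the spatial gradient of
`∂f_r/∂r` is bounded by `C / r` with `C` depending only on `β`. -/
theorem cutoff_radius_derivative_bounds (β : ℝ → ℝ) (hβ : ContDiff ℝ (⊤ : ℕ∞) β)
    (hsupp : HasCompactSupport (deriv β)) :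
    (∀ (T r : ℝ), 0 < r → ∀ x : EuclideanSpace ℝ (Fin 4), x ≠ 0 →
      |deriv (fun s : ℝ => β (Real.log ‖x‖ - Real.log s + T)) r| ≤
        (⨆ t : ℝ, |deriv β t|) / r) ∧
    ∃ C : ℝ, ∀ (T r : ℝ), 0 < r →
      (∫ x : EuclideanSpace ℝ (Fin 4),
          ‖fderiv ℝ (fun y : EuclideanSpace ℝ (Fin 4) =>
            deriv (fun s : ℝ => β (Real.log ‖y‖ - Real.log s + T)) r) x‖ ^ 4) ^
        ((1 : ℝ) / 4) ≤ C / r := by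
  have hderiv (A T : ℝ) {r : ℝ} (hr : 0 < r) :
      deriv (fun s => β (A - Real.log s + T)) r = -deriv β (A - Real.log r + T) / r :=
    (hasDerivAt_comp_sub_log_add (hβ.differentiable (by simp) _) hr.ne').deriv
  set φ : EuclideanSpace ℝ (Fin 4) → ℝ := fun z => deriv β (Real.log ‖z‖)
  refine ⟨fun T r hr x _ => ?_, (∫ x, ‖fderiv ℝ φ x‖ ^ 4) ^ ((1 : ℝ) / 4), fun T r hr => ?_⟩
  · have hbdd : BddAbove (Set.range fun t => |deriv β t|) :=
      (hβ.continuous_deriv (by simp)).norm.bddAbove_range_of_hasCompactSupport hsupp.norm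
    rw [hderiv _ _ hr, abs_div, abs_neg, abs_of_pos hr]
    exact div_le_div_of_nonneg_right (le_ciSup hbdd _) hr.le
  · have hscale : ∀ y ≠ 0,
        fderiv ℝ (fun y => deriv (fun s => β (Real.log ‖y‖ - Real.log s + T)) r) y
          = fderiv ℝ (fun y => (-r⁻¹) • φ ((Real.exp T / r) • y)) y := by
      intro y hy
      apply Filter.EventuallyEq.fderiv_eq
      filter_upwards [isOpen_compl_singleton.mem_nhds hy] with z hz
      rw [hderiv _ _ hr, log_norm_sub_log_add_eq_log_norm_smul hr T hz, smul_eq_mul, neg_div,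
        div_eq_inv_mul, neg_mul]
    have hdil := integral_norm_fderiv_pow_finrank_const_smul_comp_const_smul volume φ (-r⁻¹)
      (a := Real.exp T / r) (by positivity)
    rw [finrank_euclideanSpace_fin, abs_neg, abs_inv, abs_of_pos hr] at hdil
    rw [integral_congr_ae (by
        filter_upwards [compl_mem_ae_iff.2 (measure_singleton 0)] with y hy
        rw [hscale y hy]), hdil,
      Real.mul_rpow (by positivity) (integral_nonneg fun _ => by positivity),
      show (1 : ℝ) / 4 = ((4 : ℕ) : ℝ)⁻¹ by norm_num, Real.pow_rpow_inv_natCast (by positivity)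
        (by norm_num), div_eq_inv_mul]
end

section
/- Let E be a real inner product space, let 𝕄 be a normed ring, and let B be the open unit ball of E. Let A : E → (E →L[ℝ] 𝕄) be continuously differentiable on B and suppose A is in radial gauge, i.e. (A y) y = 0 for all y ∈ B. Define the curvature F of A by F y (a, b) = (fderiv A y a) b − (fderiv A y b) a + (A y a)·(A y b) − (A y b)·(A y a). If κ ≥ 0 is such that ‖F y (a, b)‖ ≤ κ ‖a‖ ‖b‖ for all y ∈ B and a, b ∈ E, then for all x ∈ B and v ∈ E, ‖(A x) v‖ ≤ κ ‖x‖ ‖v‖. -/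
/-!
Along the ray `t ↦ t • x` the radial gauge condition `A (t • x) (t • x) = 0`, differentiated in
the direction `v`, gives `A (t • x) v = -t • (dA_{t • x} v) x`, while `A (t • x) x = 0` kills the
quadratic part of the curvature. Hence `t ↦ t • A (t • x) v` has derivative
`t • F_{t • x}(x, v)`, and the mean value inequality on `[0, 1]` concludes.
-/

open Filter Metric Set Topology

section RadialGauge

variable {𝕜 : Type*} [NontriviallyNormedField 𝕜]
  {E : Type*} [NormedAddCommGroup E] [NormedSpace 𝕜 E]
variable {F : Type*} [NormedAddCommGroup F] [NormedSpace 𝕜 F]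

def RadialGaugeOn (A : E → E →L[𝕜] F) (s : Set E) : Prop :=
  ∀ y ∈ s, A y y = 0

variable {A : E → E →L[𝕜] F} {s : Set E}

theorem RadialGaugeOn.fderiv_apply_self_add_apply_eq_zero (hgauge : RadialGaugeOn A s)
    {y : E} (hs : s ∈ 𝓝 y) (hA : DifferentiableAt 𝕜 A y) (w : E) :
    fderiv 𝕜 A y w y + A y w = 0 := by
  have hdiag : HasFDerivAt (fun z => A z z) ((A y).comp (.id 𝕜 E) + (fderiv 𝕜 A y).flip y) y :=
    hA.hasFDerivAt.clm_apply (hasFDerivAt_id y)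
  have hzero : HasFDerivAt (fun z => A z z) (0 : E →L[𝕜] F) y :=
    (hasFDerivAt_const 0 y).congr_of_eventuallyEq <|
      eventually_of_mem hs fun z hz => hgauge z hz
  simpa [add_comm] using congrArg (· w) (hdiag.unique hzero)

theorem RadialGaugeOn.apply_zero (hgauge : RadialGaugeOn A s) (hs : s ∈ 𝓝 0)
    (hA : DifferentiableAt 𝕜 A 0) : A 0 = 0 := by
  ext w
  simpa using hgauge.fderiv_apply_self_add_apply_eq_zero hs hA w

theorem RadialGaugeOn.apply_smul_apply_eq_zero (hgauge : RadialGaugeOn A s) (hs : s ∈ 𝓝 0)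
    (hA : DifferentiableAt 𝕜 A 0) {t : 𝕜} {x : E} (htx : t • x ∈ s) : A (t • x) x = 0 := by
  rcases eq_or_ne t 0 with rfl | ht
  · simp [hgauge.apply_zero hs hA]
  · have := hgauge _ htx
    rwa [map_smul, smul_eq_zero, or_iff_right ht] at this

end RadialGauge

section Curvature

variable (𝕜 : Type*) [NontriviallyNormedField 𝕜]
  {E : Type*} [NormedAddCommGroup E] [NormedSpace 𝕜 E]
  {𝕄 : Type*} [NormedRing 𝕄] [NormedSpace 𝕜 𝕄]

noncomputable def curvature (A : E → E →L[𝕜] 𝕄) (y a b : E) : 𝕄 :=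
  fderiv 𝕜 A y a b - fderiv 𝕜 A y b a + A y a * A y b - A y b * A y a

variable {𝕜} {A : E → E →L[𝕜] 𝕄} {s : Set E}

theorem RadialGaugeOn.hasDerivAt_smul_apply_smul (hgauge : RadialGaugeOn A s) {t : 𝕜} {x : E}
    (hs : s ∈ 𝓝 (t • x)) (hA : DifferentiableAt 𝕜 A (t • x)) (hx : A (t • x) x = 0) (v : E) :
    HasDerivAt (fun τ : 𝕜 => τ • A (τ • x) v) (t • curvature 𝕜 A (t • x) x v) t := by
  have hray : HasDerivAt (fun τ : 𝕜 => A (τ • x) v) (fderiv 𝕜 A (t • x) x v) t := by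
    have := hA.hasFDerivAt.comp_hasDerivAt t ((hasDerivAt_id t).smul_const x)
    simpa using this.clm_apply (hasDerivAt_const t v)
  have hradial : A (t • x) v = -(t • fderiv 𝕜 A (t • x) v x) := by
    have := hgauge.fderiv_apply_self_add_apply_eq_zero hs hA v
    rw [map_smul] at this
    exact eq_neg_of_add_eq_zero_right this
  refine ((hasDerivAt_id' t).smul hray).congr_deriv ?_
  rw [curvature, hx, zero_mul, mul_zero, sub_zero, add_zero, one_smul, hradial, smul_sub,
    sub_eq_add_neg]

end Curvature

theorem radial_gauge_pointwise_bound_general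
    {E : Type*} [NormedAddCommGroup E] [InnerProductSpace ℝ E]
    {𝕄 : Type*} [NormedRing 𝕄] [NormedSpace ℝ 𝕄]
    (A : E → (E →L[ℝ] 𝕄)) (hA : ContDiffOn ℝ 1 A (Metric.ball 0 1))
    (hgauge : ∀ y ∈ Metric.ball (0 : E) 1, A y y = 0)
    (κ : ℝ)
    (hF : ∀ y ∈ Metric.ball (0 : E) 1, ∀ a b : E,
      ‖(fderiv ℝ A y a) b - (fderiv ℝ A y b) a + (A y a) * (A y b) - (A y b) * (A y a)‖ ≤
        κ * ‖a‖ * ‖b‖) :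
    ∀ x ∈ Metric.ball (0 : E) 1, ∀ v : E, ‖(A x) v‖ ≤ κ * ‖x‖ * ‖v‖ := by
  intro x hx v
  have hgauge : RadialGaugeOn A (ball 0 1) := hgauge
  have hdiff : ∀ y ∈ ball (0 : E) 1, DifferentiableAt ℝ A y := fun y hy =>
    (hA.differentiableOn one_ne_zero).differentiableAt (isOpen_ball.mem_nhds hy)
  have hray : ∀ t ∈ Icc (0 : ℝ) 1, t • x ∈ ball (0 : E) 1 := fun t ht =>
    (convex_ball 0 1).smul_mem_of_zero_mem (mem_ball_self one_pos) hx ht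
  have hderiv : ∀ t ∈ Icc (0 : ℝ) 1, HasDerivAt (fun τ : ℝ => τ • A (τ • x) v)
      (t • curvature ℝ A (t • x) x v) t := fun t ht =>
    hgauge.hasDerivAt_smul_apply_smul (isOpen_ball.mem_nhds (hray t ht)) (hdiff _ (hray t ht))
      (hgauge.apply_smul_apply_eq_zero (ball_mem_nhds 0 one_pos) (hdiff 0 (mem_ball_self one_pos))
        (hray t ht)) v
  have hbound : ∀ t ∈ Ico (0 : ℝ) 1, ‖t • curvature ℝ A (t • x) x v‖ ≤ κ * ‖x‖ * ‖v‖ :=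
    fun t ht => by
      rw [norm_smul, Real.norm_of_nonneg ht.1]
      exact (mul_le_of_le_one_left (norm_nonneg _) ht.2.le).trans
        (hF _ (hray t (Ico_subset_Icc_self ht)) x v)
  simpa using norm_image_sub_le_of_norm_deriv_le_segment_01'
    (fun t ht => (hderiv t ht).hasDerivWithinAt) hbound

/-- A connection matrix `A` in radial gauge on the unit ball satisfies the pointwise
bound `‖A(x)v‖ ≤ κ ‖x‖ ‖v‖`, where `κ` bounds the curvature
`F(y)(a,b) = (dA)_y(a)(b) - (dA)_y(b)(a) + A(y)(a)A(y)(b) - A(y)(b)A(y)(a)`. -/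
theorem radial_gauge_pointwise_bound
    {E : Type*} [NormedAddCommGroup E] [InnerProductSpace ℝ E]
    {𝕄 : Type*} [NormedRing 𝕄] [NormedSpace ℝ 𝕄]
    (A : E → (E →L[ℝ] 𝕄)) (hA : ContDiffOn ℝ 1 A (Metric.ball 0 1))
    (hgauge : ∀ y ∈ Metric.ball (0 : E) 1, A y y = 0)
    (κ : ℝ) (hκ : 0 ≤ κ)
    (hF : ∀ y ∈ Metric.ball (0 : E) 1, ∀ a b : E,
      ‖(fderiv ℝ A y a) b - (fderiv ℝ A y b) a + (A y a) * (A y b) - (A y b) * (A y a)‖ ≤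
        κ * ‖a‖ * ‖b‖) :
    ∀ x ∈ Metric.ball (0 : E) 1, ∀ v : E, ‖(A x) v‖ ≤ κ * ‖x‖ * ‖v‖ :=
  radial_gauge_pointwise_bound_general A hA hgauge κ hF
end

section
/- Let E and F be real normed vector spaces and let G be a topological group acting continuously on F, with each g ∈ G acting as a norm-preserving linear map (so G preserves F ∖ {0} and the unit sphere of F). Let G act on (Metric.sphere (0:E) 1) × (F ∖ {0}) through the second factor and on (E ∖ {0}) × (Metric.sphere (0:F) 1) through the second factor. Then the map f(s, v) = (‖v‖ • s, ‖v‖⁻¹ • v) is G-equivariant, and it descends to a homeomorphism of orbit spaces (each equipped with the quotient topology): ((Metric.sphere (0:E) 1) × (F ∖ {0})) / G ≃ ((E ∖ {0}) × (Metric.sphere (0:F) 1)) / G. -/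
section

variable {E F : Type*} [NormedAddCommGroup E] [NormedSpace ℝ E]
  [NormedAddCommGroup F] [NormedSpace ℝ F]
  {G : Type*} [Group G] [TopologicalSpace G] [MulAction G F]

/-- Orbit equivalence for the `G`-action on `S(E) × (F ∖ {0})` through the second
factor. -/
def flipRelDom (G : Type*) [Group G] [MulAction G F]
    (a b : Metric.sphere (0 : E) 1 × {v : F // v ≠ 0}) : Prop :=
  ∃ g : G, b.1 = a.1 ∧ (b.2 : F) = g • (a.2 : F)

/-- Orbit equivalence for the `G`-action on `(E ∖ {0}) × S(F)` through the second
factor. -/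
def flipRelCod (G : Type*) [Group G] [MulAction G F]
    (a b : {x : E // x ≠ 0} × Metric.sphere (0 : F) 1) : Prop :=
  ∃ g : G, b.1 = a.1 ∧ (b.2 : F) = g • (a.2 : F)

namespace FlipAux

/-- The flip map on total spaces. -/
noncomputable def flipFun (a : Metric.sphere (0 : E) 1 × {v : F // v ≠ 0}) :
    {x : E // x ≠ 0} × Metric.sphere (0 : F) 1 :=
  (⟨‖(a.2 : F)‖ • (a.1 : E), by
      have h1 : ‖(a.1 : E)‖ = 1 := by
        simpa using mem_sphere_zero_iff_norm.mp a.1.2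
      intro h
      rcases smul_eq_zero.mp h with h | h
      · exact a.2.2 (norm_eq_zero.mp h)
      · rw [h] at h1; simpa using h1⟩,
   ⟨‖(a.2 : F)‖⁻¹ • (a.2 : F), by
      have hv : ‖(a.2 : F)‖ ≠ 0 := norm_ne_zero_iff.mpr a.2.2
      rw [mem_sphere_zero_iff_norm, norm_smul, norm_inv, norm_norm,
        inv_mul_cancel₀ hv]⟩)

/-- The inverse flip map. -/
noncomputable def flipInv (b : {x : E // x ≠ 0} × Metric.sphere (0 : F) 1) :
    Metric.sphere (0 : E) 1 × {v : F // v ≠ 0} :=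
  (⟨‖(b.1 : E)‖⁻¹ • (b.1 : E), by
      have hx : ‖(b.1 : E)‖ ≠ 0 := norm_ne_zero_iff.mpr b.1.2
      rw [mem_sphere_zero_iff_norm, norm_smul, norm_inv, norm_norm,
        inv_mul_cancel₀ hx]⟩,
   ⟨‖(b.1 : E)‖ • (b.2 : F), by
      have hx : ‖(b.1 : E)‖ ≠ 0 := norm_ne_zero_iff.mpr b.1.2
      have h1 : ‖(b.2 : F)‖ = 1 := by
        simpa using mem_sphere_zero_iff_norm.mp b.2.2
      intro h
      rcases smul_eq_zero.mp h with h | h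
      · exact hx h
      · rw [h] at h1; simpa using h1⟩)

theorem flip_left_inv (a : Metric.sphere (0 : E) 1 × {v : F // v ≠ 0}) :
    flipInv (flipFun a) = a := by
  obtain ⟨s, v⟩ := a
  have h1 : ‖(s : E)‖ = 1 := by simpa using mem_sphere_zero_iff_norm.mp s.2
  have hv : ‖(v : F)‖ ≠ 0 := norm_ne_zero_iff.mpr v.2
  have hn : ‖‖(v : F)‖ • (s : E)‖ = ‖(v : F)‖ := by
    rw [norm_smul, norm_norm, h1, mul_one]
  simp only [flipFun, flipInv, Prod.mk.injEq, Subtype.ext_iff]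
  constructor
  · rw [hn, inv_smul_smul₀ hv]
  · rw [hn, smul_inv_smul₀ hv]

theorem flip_right_inv (b : {x : E // x ≠ 0} × Metric.sphere (0 : F) 1) :
    flipFun (flipInv b) = b := by
  obtain ⟨x, u⟩ := b
  have h1 : ‖(u : F)‖ = 1 := by simpa using mem_sphere_zero_iff_norm.mp u.2
  have hx : ‖(x : E)‖ ≠ 0 := norm_ne_zero_iff.mpr x.2
  have hn : ‖‖(x : E)‖ • (u : F)‖ = ‖(x : E)‖ := by
    rw [norm_smul, norm_norm, h1, mul_one]
  simp only [flipFun, flipInv, Prod.mk.injEq, Subtype.ext_iff]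
  constructor
  · rw [hn, smul_inv_smul₀ hx]
  · rw [hn, inv_smul_smul₀ hx]

theorem continuous_flipFun :
    Continuous (flipFun (E := E) (F := F)) := by
  refine Continuous.prodMk (Continuous.subtype_mk ?_ _) (Continuous.subtype_mk ?_ _)
  · exact Continuous.smul (by fun_prop) (by fun_prop)
  · exact Continuous.smul
      (Continuous.inv₀ (by fun_prop)
        (fun a => norm_ne_zero_iff.mpr a.2.2)) (by fun_prop)

theorem continuous_flipInv :
    Continuous (flipInv (E := E) (F := F)) := by
  refine Continuous.prodMk (Continuous.subtype_mk ?_ _) (Continuous.subtype_mk ?_ _)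
  · exact Continuous.smul
      (Continuous.inv₀ (by fun_prop)
        (fun a => norm_ne_zero_iff.mpr a.1.2)) (by fun_prop)
  · exact Continuous.smul (by fun_prop) (by fun_prop)

end FlipAux

/-- If a topological group `G` acts continuously on `F` by norm-preserving linear
maps, then the flip map `f(s, v) = (‖v‖ • s, ‖v‖⁻¹ • v)` is `G`-equivariant and
descends to a homeomorphism of the orbit spaces
`(S(E) × (F ∖ {0})) / G ≃ₜ ((E ∖ {0}) × S(F)) / G`. -/
theorem flip_equivariant_descends
    [ContinuousSMul G F]
    (hadd : ∀ (g : G) (v w : F), g • (v + w) = g • v + g • w)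
    (hsmul : ∀ (g : G) (c : ℝ) (v : F), g • (c • v) = c • (g • v))
    (hnorm : ∀ (g : G) (v : F), ‖g • v‖ = ‖v‖) :
    -- `f` is `G`-equivariant:
    (∀ (g : G) (s : Metric.sphere (0 : E) 1) (v : F),
      ‖g • v‖ • (s : E) = ‖v‖ • (s : E) ∧
      ‖g • v‖⁻¹ • (g • v) = g • (‖v‖⁻¹ • v)) ∧
    -- and it descends to a homeomorphism of orbit spaces:
    ∃ h : Quot (flipRelDom (E := E) (F := F) G) ≃ₜ Quot (flipRelCod (E := E) (F := F) G),
      ∀ (s : Metric.sphere (0 : E) 1) (v : {v : F // v ≠ 0})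
        (hx : (‖(v : F)‖ • (s : E)) ≠ 0)
        (hu : ‖(v : F)‖⁻¹ • (v : F) ∈ Metric.sphere (0 : F) 1),
        h (Quot.mk _ (s, v)) =
          Quot.mk _ (⟨‖(v : F)‖ • (s : E), hx⟩, ⟨‖(v : F)‖⁻¹ • (v : F), hu⟩) := by
  open FlipAux in
  refine ⟨fun g s v => ⟨by rw [hnorm], by rw [hnorm, hsmul]⟩, ?_⟩
  have hf : ∀ a b, flipRelDom (E := E) (F := F) G a b →
      Quot.mk (flipRelCod (E := E) (F := F) G) (flipFun a) =
      Quot.mk (flipRelCod (E := E) (F := F) G) (flipFun b) := by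
    rintro ⟨s, v⟩ ⟨s', v'⟩ ⟨g, h1, h2⟩
    simp only at h1 h2
    refine Quot.sound ⟨g, ?_, ?_⟩
    · simp only [flipFun, Subtype.ext_iff]
      rw [h2, hnorm, h1]
    · simp only [flipFun]
      rw [h2, hnorm, hsmul]
  have hg : ∀ a b, flipRelCod (E := E) (F := F) G a b →
      Quot.mk (flipRelDom (E := E) (F := F) G) (flipInv a) =
      Quot.mk (flipRelDom (E := E) (F := F) G) (flipInv b) := by
    rintro ⟨x, u⟩ ⟨x', u'⟩ ⟨g, h1, h2⟩
    simp only at h1 h2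
    refine Quot.sound ⟨g, ?_, ?_⟩
    · simp only [flipInv, Subtype.ext_iff]
      rw [h1]
    · simp only [flipInv]
      rw [h1, h2, hsmul]
  refine ⟨⟨⟨Quot.lift (fun a => Quot.mk _ (flipFun a)) hf,
      Quot.lift (fun b => Quot.mk _ (flipInv b)) hg, ?_, ?_⟩, ?_, ?_⟩, ?_⟩
  · refine Quot.ind fun a => ?_
    simp [flip_left_inv a]
  · refine Quot.ind fun b => ?_
    simp [flip_right_inv b]
  · exact continuous_quot_lift _ (continuous_quot_mk.comp continuous_flipFun)
  · exact continuous_quot_lift _ (continuous_quot_mk.comp continuous_flipInv)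
  · intro s v hx hu
    rfl

end
end
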